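/- Consider gradient descent θ_{t+1} = θ_t − η ∑_{n=1}^{D} γ_n ∇l_n(θ_t) on ℝ^N with twice continuously differentiable per-instance losses l_n, and objective A(γ) = ∑_{t'=1}^{T} J(θ_{t'}) where J is continuously differentiable. Then the partial derivative of A with respect to γ_n equals −η ∑_{t=0}^{T−1} λ_{t+1}^T ∇l_n(θ_t), where λ_t is defined by the backward recursion λ_T = ∇J(θ_T), λ_t = λ_{t+1} + ∇J(θ_t) − η ∇²L(θ_t, γ) λ_{t+1}, with L(θ, γ) = ∑_n γ_n l_n(θ). -/

import Mathlib

open scoped RealInnerProductSpace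
open InnerProductSpace
set_option maxHeartbeats 1000000

section Aux
variable {E : Type*} [NormedAddCommGroup E] [InnerProductSpace ℝ E] [CompleteSpace E]

lemma aux_fderiv_gradient_apply (f : E → ℝ) (x u : E) :
    fderiv ℝ (gradient f) x u = (toDual ℝ E).symm (fderiv ℝ (fderiv ℝ f) x u) := by
  have h : gradient f = ((toDual ℝ E).symm) ∘ (fderiv ℝ f) := rfl
  rw [h, LinearIsometryEquiv.comp_fderiv]
  simp

lemma aux_hess_symm (f : E → ℝ) (hf : ContDiff ℝ 2 f) (x u w : E) :
    ⟪fderiv ℝ (gradient f) x u, w⟫ = ⟪fderiv ℝ (gradient f) x w, u⟫ := by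
  rw [aux_fderiv_gradient_apply f x u, aux_fderiv_gradient_apply f x w,
    toDual_symm_apply, toDual_symm_apply]
  exact hf.contDiffAt.isSymmSndFDerivAt (by simp) u w

lemma aux_contDiff_gradient (f : E → ℝ) (hf : ContDiff ℝ 2 f) : ContDiff ℝ 1 (gradient f) := by
  have h : gradient f = ((toDual ℝ E).symm) ∘ (fderiv ℝ f) := rfl
  rw [h]
  exact ((toDual ℝ E).symm.contDiff).comp (hf.fderiv_right (by norm_num))

end Aux


/-- For gradient descent `θ_{t+1} = θ_t − η ∑_n γ_n ∇l_n(θ_t)` and objective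
`A(γ) = ∑_{t'=1}^{T} J(θ_{t'})`, the partial derivative of `A` with respect to `γ_n`
equals `−η ∑_{t=0}^{T−1} λ_{t+1}ᵀ ∇l_n(θ_t)`, where `λ` satisfies the backward recursion
`λ_T = ∇J(θ_T)`, `λ_t = λ_{t+1} + ∇J(θ_t) − η ∇²L(θ_t, γ) λ_{t+1}`. -/
theorem stmt_4 {N D T : ℕ} (hT : 1 ≤ T) (η : ℝ) (hη : 0 < η)
    (l : Fin D → EuclideanSpace ℝ (Fin N) → ℝ)
    (hl : ∀ n, ContDiff ℝ 2 (l n))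
    (J : EuclideanSpace ℝ (Fin N) → ℝ) (hJ : ContDiff ℝ 1 J)
    (θ0 : EuclideanSpace ℝ (Fin N))
    (θfun : (Fin D → ℝ) → ℕ → EuclideanSpace ℝ (Fin N))
    (hθ0 : ∀ γ, θfun γ 0 = θ0)
    (hθrec : ∀ γ t, θfun γ (t + 1) =
      θfun γ t - η • ∑ n, γ n • gradient (l n) (θfun γ t))
    (γ : Fin D → ℝ)
    (lam : ℕ → EuclideanSpace ℝ (Fin N))
    (hlamT : lam T = gradient J (θfun γ T))
    (hlamrec : ∀ t < T, lam t = lam (t + 1) + gradient J (θfun γ t)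
      - η • (fderiv ℝ (gradient (fun θ => ∑ n, γ n * l n θ)) (θfun γ t)) (lam (t + 1)))
    (n : Fin D) :
    HasDerivAt (fun x : ℝ => ∑ t' ∈ Finset.Icc 1 T, J (θfun (Function.update γ n x) t'))
      (-η * ∑ t ∈ Finset.range T, ⟪lam (t + 1), gradient (l n) (θfun γ t)⟫)
      (γ n) := by
  set L : EuclideanSpace ℝ (Fin N) → ℝ := fun θ => ∑ m, γ m * l m θ with hLdef
  have hL : ContDiff ℝ 2 L := ContDiff.sum fun m _ => contDiff_const.mul (hl m)
  -- gradient of L is the weighted sum of gradients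
  have hgradL : gradient L = fun y => ∑ m, γ m • gradient (l m) y := by
    funext y
    have h : HasGradientAt L (∑ m, γ m • gradient (l m) y) y := by
      rw [hasGradientAt_iff_hasFDerivAt]
      have hmap : (toDual ℝ (EuclideanSpace ℝ (Fin N))) (∑ m, γ m • gradient (l m) y)
          = ∑ m, γ m • (toDual ℝ (EuclideanSpace ℝ (Fin N))) (gradient (l m) y) := by
        simp [map_sum, map_smul]
      rw [hmap]
      exact HasFDerivAt.fun_sum fun m _ =>
        (((hl m).differentiable (by norm_num) y).hasGradientAt.hasFDerivAt).const_mul (γ m)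
    exact h.gradient
  -- derivative of gradient L
  have hHsum : ∀ x : EuclideanSpace ℝ (Fin N), HasFDerivAt (gradient L)
      (∑ m, γ m • fderiv ℝ (gradient (l m)) x) x := by
    intro x
    rw [hgradL]
    exact HasFDerivAt.fun_sum fun m _ =>
      (((aux_contDiff_gradient _ (hl m)).differentiable (by norm_num) x).hasFDerivAt).const_smul (γ m)
  have hHfd : ∀ x : EuclideanSpace ℝ (Fin N), fderiv ℝ (gradient L) x = ∑ m, γ m • fderiv ℝ (gradient (l m)) x :=
    fun x => (hHsum x).fderiv
  -- the tangent vector recursion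
  set v : ℕ → EuclideanSpace ℝ (Fin N) := fun t => Nat.rec (0 : EuclideanSpace ℝ (Fin N))
    (fun t vt => vt - η • (gradient (l n) (θfun γ t) + (fderiv ℝ (gradient L) (θfun γ t)) vt)) t
    with hvdef
  have hv0 : v 0 = 0 := by rw [hvdef]; rfl
  have hvsucc : ∀ t, v (t + 1)
      = v t - η • (gradient (l n) (θfun γ t) + (fderiv ℝ (gradient L) (θfun γ t)) (v t)) := by
    intro t; rw [hvdef]
  have hupdate : Function.update γ n (γ n) = γ := Function.update_eq_self n γ
  -- forward sensitivity
  have hv : ∀ t, HasDerivAt (fun x : ℝ => θfun (Function.update γ n x) t) (v t) (γ n) := by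
    intro t
    induction t with
    | zero =>
      have : (fun x : ℝ => θfun (Function.update γ n x) 0) = fun _ => θ0 := by
        funext x; exact hθ0 _
      rw [this, hv0]
      exact hasDerivAt_const (γ n) θ0
    | succ t ih =>
      have key : ∀ m : Fin D, HasDerivAt
          (fun x : ℝ => Function.update γ n x m • gradient (l m) (θfun (Function.update γ n x) t))
          (γ m • ((fderiv ℝ (gradient (l m)) (θfun γ t)) (v t))
            + (if m = n then (1:ℝ) else 0) • gradient (l m) (θfun γ t)) (γ n) := by
        intro m
        have hc : HasDerivAt (fun x : ℝ => Function.update γ n x m)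
            (if m = n then (1:ℝ) else 0) (γ n) := by
          by_cases h : m = n
          · subst h
            simp only [Function.update_self, if_pos rfl]
            exact hasDerivAt_id _
          · simp only [Function.update_of_ne h, if_neg h]
            exact hasDerivAt_const _ _
        have hg : HasDerivAt (fun x : ℝ => gradient (l m) (θfun (Function.update γ n x) t))
            ((fderiv ℝ (gradient (l m)) (θfun γ t)) (v t)) (γ n) := by
          have hd : HasFDerivAt (gradient (l m)) (fderiv ℝ (gradient (l m)) (θfun γ t))
              (θfun (Function.update γ n (γ n)) t) := by
            rw [hupdate]
            exact ((aux_contDiff_gradient _ (hl m)).differentiable (by norm_num) _).hasFDerivAt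
          exact hd.comp_hasDerivAt (γ n) ih
        have h2 := hc.smul hg
        rw [hupdate] at h2
        exact h2
      have hsum := HasDerivAt.fun_sum (fun m (_ : m ∈ Finset.univ) => key m)
      have hsval : (∑ m : Fin D, (γ m • ((fderiv ℝ (gradient (l m)) (θfun γ t)) (v t))
            + (if m = n then (1:ℝ) else 0) • gradient (l m) (θfun γ t)))
          = gradient (l n) (θfun γ t) + (fderiv ℝ (gradient L) (θfun γ t)) (v t) := by
        rw [Finset.sum_add_distrib, add_comm]
        congr 1
        · simp [ite_smul]
        · rw [hHfd]
          simp [ContinuousLinearMap.sum_apply]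
      rw [hsval] at hsum
      have hfun : (fun x : ℝ => θfun (Function.update γ n x) (t + 1))
          = fun x : ℝ => θfun (Function.update γ n x) t
            - η • ∑ m, Function.update γ n x m • gradient (l m) (θfun (Function.update γ n x) t) := by
        funext x; exact hθrec _ t
      rw [hfun, hvsucc]
      exact ih.sub (hsum.const_smul η)
  -- derivative of the objective
  have hA : HasDerivAt (fun x : ℝ => ∑ t' ∈ Finset.Icc 1 T, J (θfun (Function.update γ n x) t'))
      (∑ t' ∈ Finset.Icc 1 T, ⟪gradient J (θfun γ t'), v t'⟫) (γ n) := by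
    apply HasDerivAt.fun_sum
    intro t' _
    have hJd : HasFDerivAt J ((toDual ℝ (EuclideanSpace ℝ (Fin N))) (gradient J (θfun γ t')))
        (θfun (Function.update γ n (γ n)) t') := by
      rw [hupdate]
      exact ((hJ.differentiable (by norm_num) _).hasGradientAt).hasFDerivAt
    have := hJd.comp_hasDerivAt (γ n) (hv t')
    simpa [toDual_apply_apply, Function.comp_def] using this
  -- adjoint telescoping identity
  have hstep : ∀ t < T, ⟪lam (t+1), v (t+1)⟫ - ⟪lam t, v t⟫
      = -η * ⟪lam (t+1), gradient (l n) (θfun γ t)⟫ - ⟪gradient J (θfun γ t), v t⟫ := by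
    intro t ht
    have hsym := aux_hess_symm L hL (θfun γ t) (lam (t+1)) (v t)
    have hc2 : (⟪lam (t+1), (fderiv ℝ (gradient L) (θfun γ t)) (v t)⟫ : ℝ)
        = ⟪(fderiv ℝ (gradient L) (θfun γ t)) (v t), lam (t+1)⟫ := real_inner_comm _ _
    rw [hvsucc t, hlamrec t ht]
    simp only [inner_sub_left, inner_sub_right, inner_add_left, inner_add_right,
      real_inner_smul_left, real_inner_smul_right]
    linear_combination η * hsym - η * hc2
  have htel := Finset.sum_range_sub (fun t => (⟪lam t, v t⟫ : ℝ)) T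
  have htel2 : ∑ t ∈ Finset.range T, ((⟪lam (t+1), v (t+1)⟫ : ℝ) - ⟪lam t, v t⟫)
      = ∑ t ∈ Finset.range T, (-η * ⟪lam (t+1), gradient (l n) (θfun γ t)⟫
        - ⟪gradient J (θfun γ t), v t⟫) :=
    Finset.sum_congr rfl fun t ht => hstep t (Finset.mem_range.mp ht)
  -- convert sums
  have hIcc : ∑ t' ∈ Finset.Icc 1 T, (⟪gradient J (θfun γ t'), v t'⟫ : ℝ)
      = ∑ t ∈ Finset.range T, ⟪gradient J (θfun γ (t+1)), v (t+1)⟫ := by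
    rw [← Finset.Ico_add_one_right_eq_Icc, Finset.sum_Ico_eq_sum_range]
    simp [add_comm]
  have hshift : ∑ t ∈ Finset.range T, (⟪gradient J (θfun γ (t+1)), v (t+1)⟫ : ℝ)
      = ∑ t ∈ Finset.range T, ⟪gradient J (θfun γ t), v t⟫
        + ⟪gradient J (θfun γ T), v T⟫ - ⟪gradient J (θfun γ 0), v 0⟫ := by
    have h1 := Finset.sum_range_succ (fun t => (⟪gradient J (θfun γ t), v t⟫ : ℝ)) T
    have h2 := Finset.sum_range_succ' (fun t => (⟪gradient J (θfun γ t), v t⟫ : ℝ)) T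
    rw [h1] at h2
    linarith [h2]
  have h00 : (⟪lam 0, v 0⟫ : ℝ) = 0 := by rw [hv0]; simp
  have h01 : (⟪gradient J (θfun γ 0), v 0⟫ : ℝ) = 0 := by rw [hv0]; simp
  rw [htel2, Finset.sum_sub_distrib] at htel
  have hmul : ∑ t ∈ Finset.range T, (-η * (⟪lam (t + 1), gradient (l n) (θfun γ t)⟫ : ℝ))
      = -η * ∑ t ∈ Finset.range T, ⟪lam (t + 1), gradient (l n) (θfun γ t)⟫ :=
    (Finset.mul_sum _ _ _).symm
  rw [hmul, h00, hlamT] at htel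
  have hfinal : ∑ t' ∈ Finset.Icc 1 T, (⟪gradient J (θfun γ t'), v t'⟫ : ℝ)
      = -η * ∑ t ∈ Finset.range T, ⟪lam (t + 1), gradient (l n) (θfun γ t)⟫ := by
    rw [hIcc, hshift, h01]
    linarith [htel]
  rw [hfinal] at hA
  exact hA
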